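/- arXiv:2110.02499 — 2 statements merged into one kernel-verified Lean document; each statement's English description precedes it below -/
import Mathlib

section
/- For every bounded linear operator A on a complex Hilbert space, (1/4)‖A*A + AA*‖ ≤ (1/4)‖Re(A) + Im(A)‖² + (1/4)‖Re(A) − Im(A)‖² ≤ (1/4)‖Re(A) + Im(A)‖² + (1/4)‖Re(A) − Im(A)‖² + (1/4)c²(Re(A) + Im(A)) + (1/4)c²(Re(A) − Im(A)) ≤ w²(A). -/
/-!
Put `S = Re A + Im A` and `D = Re A - Im A`. These are self-adjoint and `S² + D² = A*A + AA*`,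
which gives the first inequality. For a unit vector `x` the numbers `r = ⟨Re A x, x⟩` and
`j = ⟨Im A x, x⟩` are real with `|⟨Ax, x⟩|² = r² + j²`, so
`|⟨Sx, x⟩|² + |⟨Dx, x⟩|² = (r + j)² + (r - j)² = 2 |⟨Ax, x⟩|² ≤ 2 w²(A)`.
Bounding the second term below by `c²(D)` and using that the norm of a self-adjoint operator is
the supremum of `|⟨Sx, x⟩|` over unit vectors yields `‖S‖² + c²(D) ≤ 2 w²(A)`; the same with `S`
and `D` exchanged, added to it, is the last inequality.
-/

open scoped InnerProductSpace
open ContinuousLinearMap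

/-- The numerical radius of a bounded linear operator. -/
noncomputable def numRadius {H : Type*} [NormedAddCommGroup H] [InnerProductSpace ℂ H]
    (A : H →L[ℂ] H) : ℝ :=
  sSup {r : ℝ | ∃ x : H, ‖x‖ = 1 ∧ r = ‖⟪A x, x⟫_ℂ‖}

/-- The Crawford number of a bounded linear operator. -/
noncomputable def crawford {H : Type*} [NormedAddCommGroup H] [InnerProductSpace ℂ H]
    (A : H →L[ℂ] H) : ℝ :=
  sInf {r : ℝ | ∃ x : H, ‖x‖ = 1 ∧ r = ‖⟪A x, x⟫_ℂ‖}

/-- The real part of a bounded linear operator. -/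
noncomputable def reP {H : Type*} [NormedAddCommGroup H] [InnerProductSpace ℂ H]
    [CompleteSpace H] (A : H →L[ℂ] H) : H →L[ℂ] H :=
  ((2 : ℂ)⁻¹) • (A + adjoint A)

/-- The imaginary part of a bounded linear operator. -/
noncomputable def imP {H : Type*} [NormedAddCommGroup H] [InnerProductSpace ℂ H]
    [CompleteSpace H] (A : H →L[ℂ] H) : H →L[ℂ] H :=
  ((2 * Complex.I)⁻¹) • (A - adjoint A)

open scoped ComplexStarModule

theorem star_mul_self_add_mul_star_eq {A : Type*} [Ring A] [StarRing A] [Algebra ℂ A]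
    [StarModule ℂ A] (a : A) :
    star a * a + a * star a = (ℜ a + ℑ a : A) ^ 2 + (ℜ a - ℑ a : A) ^ 2 := by
  have hR := (ℜ a).prop
  have hJ := (ℑ a).prop
  conv_lhs => rw [← realPart_add_I_smul_imaginaryPart a]
  generalize (ℜ a : A) = R at *
  generalize (ℑ a : A) = J at *
  simp only [star_add, star_smul, hR.star_eq, hJ.star_eq, Complex.star_def, Complex.conj_I, sq,
    add_mul, mul_add, sub_mul, mul_sub, smul_mul_assoc, mul_smul_comm]
  match_scalars <;> simp

theorem ContinuousLinearMap.norm_le_of_norm_inner_self_le {𝕜 E : Type*} [RCLike 𝕜]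
    [NormedAddCommGroup E] [InnerProductSpace 𝕜 E] {T : E →L[𝕜] E}
    (hT : (T : E →ₗ[𝕜] E).IsSymmetric) {M : ℝ} (hM : 0 ≤ M)
    (h : ∀ x : E, ‖x‖ = 1 → ‖⟪T x, x⟫_𝕜‖ ≤ M) : ‖T‖ ≤ M := by
  rw [T.norm_eq_iSup_rayleighQuotient hT]
  refine ciSup_le fun x => ?_
  rcases eq_or_ne x 0 with rfl | hx
  · simpa using hM
  have hx' : ((‖x‖⁻¹ : ℝ) : 𝕜) ≠ 0 := by simpa using hx
  have hu : ‖((‖x‖⁻¹ : ℝ) : 𝕜) • x‖ = 1 := by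
    simp [norm_smul, hx]
  rw [← T.rayleigh_smul x hx', rayleighQuotient, hu, one_pow, div_one,
    reApplyInnerSelf_apply]
  exact (RCLike.abs_re_le_norm _).trans (h _ hu)

section NumericalRange

variable {H : Type*} [NormedAddCommGroup H] [InnerProductSpace ℂ H]

theorem norm_inner_self_le_numRadius (A : H →L[ℂ] H) {x : H} (hx : ‖x‖ = 1) :
    ‖⟪A x, x⟫_ℂ‖ ≤ numRadius A := by
  refine le_csSup ⟨‖A‖, ?_⟩ ⟨x, hx, rfl⟩
  rintro r ⟨y, hy, rfl⟩
  exact (norm_inner_le_norm _ _).trans (by simpa [hy] using A.le_opNorm y)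

theorem crawford_le_norm_inner_self (A : H →L[ℂ] H) {x : H} (hx : ‖x‖ = 1) :
    crawford A ≤ ‖⟪A x, x⟫_ℂ‖ :=
  csInf_le ⟨0, fun _ ⟨_, _, hr⟩ => hr ▸ norm_nonneg _⟩ ⟨x, hx, rfl⟩

theorem crawford_nonneg (A : H →L[ℂ] H) : 0 ≤ crawford A :=
  Real.sInf_nonneg fun _ ⟨_, _, hr⟩ => hr ▸ norm_nonneg _

theorem norm_sq_add_crawford_sq_le [CompleteSpace H] [Nontrivial H] {S D : H →L[ℂ] H}
    (hS : IsSelfAdjoint S) {M : ℝ}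
    (h : ∀ x : H, ‖x‖ = 1 → ‖⟪S x, x⟫_ℂ‖ ^ 2 + ‖⟪D x, x⟫_ℂ‖ ^ 2 ≤ M) :
    ‖S‖ ^ 2 + crawford D ^ 2 ≤ M := by
  have hS_le : ∀ x : H, ‖x‖ = 1 → ‖⟪S x, x⟫_ℂ‖ ^ 2 ≤ M - crawford D ^ 2 := fun x hx => by
    have := pow_le_pow_left₀ (crawford_nonneg D) (crawford_le_norm_inner_self D hx) 2
    linarith [h x hx]
  obtain ⟨x₀, hx₀⟩ := exists_norm_eq H zero_le_one
  have hM : 0 ≤ M - crawford D ^ 2 := (sq_nonneg _).trans (hS_le x₀ hx₀)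
  have hS_norm : ‖S‖ ≤ √(M - crawford D ^ 2) :=
    norm_le_of_norm_inner_self_le hS.isSymmetric (Real.sqrt_nonneg _)
      fun x hx => Real.le_sqrt_of_sq_le (hS_le x hx)
  linarith [(Real.le_sqrt (norm_nonneg S) hM).1 hS_norm]

end NumericalRange

section RealImaginaryParts

variable {H : Type*} [NormedAddCommGroup H] [InnerProductSpace ℂ H] [CompleteSpace H]

theorem reP_eq_realPart (A : H →L[ℂ] H) : reP A = ℜ A := by
  rw [reP, realPart_apply_coe, star_eq_adjoint, ← Complex.coe_smul]
  norm_num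

theorem imP_eq_imaginaryPart (A : H →L[ℂ] H) : imP A = ℑ A := by
  rw [imP, imaginaryPart_apply_coe, star_eq_adjoint, ← Complex.coe_smul, smul_smul]
  congr 1
  field_simp
  norm_num

theorem norm_inner_add_sq_add_norm_inner_sub_sq {R J : H →L[ℂ] H} (hR : IsSelfAdjoint R)
    (hJ : IsSelfAdjoint J) (x : H) :
    ‖⟪(R + J) x, x⟫_ℂ‖ ^ 2 + ‖⟪(R - J) x, x⟫_ℂ‖ ^ 2 =
      2 * ‖⟪(R + Complex.I • J) x, x⟫_ℂ‖ ^ 2 := by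
  obtain ⟨r, hr⟩ : ∃ r : ℝ, ⟪R x, x⟫_ℂ = r :=
    ⟨_, (hR.isSymmetric.coe_re_inner_apply_self x).symm⟩
  obtain ⟨j, hj⟩ : ∃ j : ℝ, ⟪J x, x⟫_ℂ = j :=
    ⟨_, (hJ.isSymmetric.coe_re_inner_apply_self x).symm⟩
  have h_add : ⟪(R + J) x, x⟫_ℂ = (r + j : ℝ) := by simp [hr, hj]
  have h_sub : ⟪(R - J) x, x⟫_ℂ = (r - j : ℝ) := by simp [hr, hj]
  have h_comb : ⟪(R + Complex.I • J) x, x⟫_ℂ = ⟨r, -j⟩ := by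
    simp [hr, hj, Complex.ext_iff]
  rw [h_add, h_sub, h_comb, Complex.norm_real, Complex.norm_real, Real.norm_eq_abs,
    Real.norm_eq_abs, sq_abs, sq_abs, Complex.sq_norm, Complex.normSq_mk]
  ring

end RealImaginaryParts

theorem stmt1 {H : Type*} [NormedAddCommGroup H] [InnerProductSpace ℂ H]
    [CompleteSpace H] [Nontrivial H] (A : H →L[ℂ] H) :
    (1/4 : ℝ) * ‖adjoint A * A + A * adjoint A‖ ≤
        (1/4 : ℝ) * ‖reP A + imP A‖ ^ 2 + (1/4 : ℝ) * ‖reP A - imP A‖ ^ 2 ∧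
    (1/4 : ℝ) * ‖reP A + imP A‖ ^ 2 + (1/4 : ℝ) * ‖reP A - imP A‖ ^ 2 ≤
        (1/4 : ℝ) * ‖reP A + imP A‖ ^ 2 + (1/4 : ℝ) * ‖reP A - imP A‖ ^ 2 +
          (1/4 : ℝ) * crawford (reP A + imP A) ^ 2 +
          (1/4 : ℝ) * crawford (reP A - imP A) ^ 2 ∧
    (1/4 : ℝ) * ‖reP A + imP A‖ ^ 2 + (1/4 : ℝ) * ‖reP A - imP A‖ ^ 2 +
        (1/4 : ℝ) * crawford (reP A + imP A) ^ 2 +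
        (1/4 : ℝ) * crawford (reP A - imP A) ^ 2 ≤ numRadius A ^ 2 := by
  rw [reP_eq_realPart, imP_eq_imaginaryPart, ← star_eq_adjoint, star_mul_self_add_mul_star_eq]
  have hA : (ℜ A : H →L[ℂ] H) + Complex.I • (ℑ A : H →L[ℂ] H) = A :=
    realPart_add_I_smul_imaginaryPart A
  set R : H →L[ℂ] H := ↑(ℜ A)
  set J : H →L[ℂ] H := ↑(ℑ A)
  have hR : IsSelfAdjoint R := (ℜ A).prop
  have hJ : IsSelfAdjoint J := (ℑ A).prop
  have h_inner : ∀ x : H, ‖x‖ = 1 →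
      ‖⟪(R + J) x, x⟫_ℂ‖ ^ 2 + ‖⟪(R - J) x, x⟫_ℂ‖ ^ 2 ≤ 2 * numRadius A ^ 2 := fun x hx => by
    rw [norm_inner_add_sq_add_norm_inner_sub_sq hR hJ, hA]
    gcongr
    exact norm_inner_self_le_numRadius A hx
  have h_add := norm_sq_add_crawford_sq_le (hR.add hJ) h_inner
  have h_sub := norm_sq_add_crawford_sq_le (hR.sub hJ) fun x hx =>
    (add_comm _ _).le.trans (h_inner x hx)
  have h_sq : ‖(R + J) ^ 2 + (R - J) ^ 2‖ ≤ ‖R + J‖ ^ 2 + ‖R - J‖ ^ 2 :=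
    (norm_add_le _ _).trans (add_le_add (norm_pow_le _ 2) (norm_pow_le _ 2))
  refine ⟨by linarith, ?_, by linarith⟩
  linarith [sq_nonneg (crawford (R + J)), sq_nonneg (crawford (R - J))]
end

section
/- For every bounded linear operator A on a complex Hilbert space, (1/4)‖A*A + AA*‖ ≤ (1/(2√2))( ‖Re(A) + Im(A)‖⁴ + ‖Re(A) − Im(A)‖⁴ )^{1/2} ≤ w²(A). -/
open scoped InnerProductSpace
open ContinuousLinearMap

/-!
With `P = Re A + Im A` and `Q = Re A - Im A` one has `A*A + AA* = P² + Q²`, so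
`‖A*A + AA*‖ ≤ ‖P‖² + ‖Q‖² ≤ √2 (‖P‖⁴ + ‖Q‖⁴)^{1/2}`. Moreover `P = Re((1 - i)A)` and
`Q = Re((1 + i)A)`, and the real part of an operator is self-adjoint with the same real
quadratic form, so its norm is at most the numerical radius; hence `‖P‖, ‖Q‖ ≤ √2 w(A)`.
-/

theorem ContinuousLinearMap.norm_le_of_isSymmetric_of_abs_re_inner_self_le {𝕜 E : Type*}
    [RCLike 𝕜] [NormedAddCommGroup E] [InnerProductSpace 𝕜 E] {T : E →L[𝕜] E}
    (hT : (T : E →ₗ[𝕜] E).IsSymmetric) {M : ℝ} (hM : 0 ≤ M)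
    (h : ∀ x, |RCLike.re (inner 𝕜 (T x) x)| ≤ M * ‖x‖ ^ 2) : ‖T‖ ≤ M := by
  rw [T.norm_eq_iSup_rayleighQuotient hT]
  refine ciSup_le fun x ↦ ?_
  rcases eq_or_ne x 0 with rfl | hx
  · simpa using hM
  rw [rayleighQuotient, reApplyInnerSelf_apply, abs_div, abs_sq, div_le_iff₀ (by positivity)]
  exact h x

theorem Complex.norm_one_sub_I : ‖1 - Complex.I‖ = √2 := by
  rw [Complex.norm_def, Complex.normSq_apply]
  norm_num

theorem Complex.norm_one_add_I : ‖1 + Complex.I‖ = √2 := by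
  rw [Complex.norm_def, Complex.normSq_apply]
  norm_num

theorem sq_add_sq_le_sqrt_two_mul_sqrt (a b : ℝ) : a ^ 2 + b ^ 2 ≤ √2 * √(a ^ 4 + b ^ 4) := by
  rw [← Real.sqrt_mul zero_le_two, Real.le_sqrt (by positivity) (by positivity)]
  nlinarith [sq_nonneg (a ^ 2 - b ^ 2)]

theorem sqrt_pow_four_add_pow_four_le {a b w : ℝ} (ha : 0 ≤ a) (hb : 0 ≤ b)
    (haw : a ≤ √2 * w) (hbw : b ≤ √2 * w) : √(a ^ 4 + b ^ 4) ≤ 2 * √2 * w ^ 2 := by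
  have h2 : √2 ^ 2 = 2 := Real.sq_sqrt zero_le_two
  have pow_four_le {c : ℝ} (hc : 0 ≤ c) (hcw : c ≤ √2 * w) : c ^ 4 ≤ 4 * w ^ 4 :=
    calc c ^ 4 ≤ ((√2) ^ 2) ^ 2 * w ^ 4 := by rw [← pow_mul, ← mul_pow]; gcongr
      _ = 4 * w ^ 4 := by rw [h2]; norm_num
  rw [Real.sqrt_le_left (by positivity), mul_pow, mul_pow, h2]
  linarith [pow_four_le ha haw, pow_four_le hb hbw]

section NumericalRadius

variable {H : Type*} [NormedAddCommGroup H] [InnerProductSpace ℂ H]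

theorem numRadius_nonneg (A : H →L[ℂ] H) : 0 ≤ numRadius A :=
  Real.sSup_nonneg <| by rintro _ ⟨x, -, rfl⟩; exact norm_nonneg _

theorem bddAbove_numRadius (A : H →L[ℂ] H) :
    BddAbove {r : ℝ | ∃ x : H, ‖x‖ = 1 ∧ r = ‖⟪A x, x⟫_ℂ‖} := by
  refine ⟨‖A‖, ?_⟩
  rintro _ ⟨x, hx, rfl⟩
  calc ‖⟪A x, x⟫_ℂ‖ ≤ ‖A x‖ * ‖x‖ := norm_inner_le_norm _ _
    _ ≤ ‖A‖ * ‖x‖ * ‖x‖ := by gcongr; exact A.le_opNorm x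
    _ = ‖A‖ := by rw [hx, mul_one, mul_one]

theorem norm_inner_self_le_numRadius_mul_sq (A : H →L[ℂ] H) (x : H) :
    ‖⟪A x, x⟫_ℂ‖ ≤ numRadius A * ‖x‖ ^ 2 := by
  rcases eq_or_ne x 0 with rfl | hx
  · simp
  have hu : ‖((‖x‖⁻¹ : ℝ) : ℂ) • x‖ = 1 := by simp [norm_smul, hx]
  have := le_csSup (bddAbove_numRadius A) ⟨_, hu, rfl⟩
  rwa [map_smul, inner_smul_left, inner_smul_right, norm_mul, norm_mul, Complex.conj_ofReal,
    Complex.norm_real, norm_inv, norm_norm, ← mul_assoc, ← sq, inv_pow, ← div_eq_inv_mul,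
    div_le_iff₀ (by positivity)] at this

end NumericalRadius

section RealImaginaryParts

variable {H : Type*} [NormedAddCommGroup H] [InnerProductSpace ℂ H] [CompleteSpace H]

theorem isSelfAdjoint_reP (A : H →L[ℂ] H) : IsSelfAdjoint (reP A) := by
  simp [reP, IsSelfAdjoint, star_eq_adjoint, add_comm]

theorem re_inner_reP_apply_self (A : H →L[ℂ] H) (x : H) :
    (⟪reP A x, x⟫_ℂ).re = (⟪A x, x⟫_ℂ).re := by
  simp only [reP, smul_apply, add_apply, inner_smul_left, inner_add_left, adjoint_inner_left]
  rw [← inner_conj_symm x (A x), Complex.add_conj]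
  simp

theorem norm_reP_le_of_norm_inner_self_le (A : H →L[ℂ] H) {M : ℝ} (hM : 0 ≤ M)
    (h : ∀ x, ‖⟪A x, x⟫_ℂ‖ ≤ M * ‖x‖ ^ 2) : ‖reP A‖ ≤ M :=
  norm_le_of_isSymmetric_of_abs_re_inner_self_le (isSelfAdjoint_reP A).isSymmetric hM fun x ↦ by
    simpa [re_inner_reP_apply_self] using (Complex.abs_re_le_norm _).trans (h x)

theorem norm_reP_smul_le (c : ℂ) (A : H →L[ℂ] H) : ‖reP (c • A)‖ ≤ ‖c‖ * numRadius A :=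
  norm_reP_le_of_norm_inner_self_le _ (by positivity [numRadius_nonneg A]) fun x ↦ by
    rw [smul_apply, inner_smul_left, norm_mul, RCLike.norm_conj, mul_assoc]
    exact mul_le_mul_of_nonneg_left (norm_inner_self_le_numRadius_mul_sq A x) (norm_nonneg c)

theorem reP_add_imP (A : H →L[ℂ] H) : reP A + imP A = reP ((1 - Complex.I) • A) := by
  simp only [reP, imP, map_smulₛₗ, map_sub, map_one, Complex.conj_I]
  match_scalars <;> field_simp <;> ring_nf <;> simp only [Complex.I_sq] <;> ring

theorem reP_sub_imP (A : H →L[ℂ] H) : reP A - imP A = reP ((1 + Complex.I) • A) := by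
  simp only [reP, imP, map_smulₛₗ, map_add, map_one, Complex.conj_I]
  match_scalars <;> field_simp <;> ring_nf <;> simp only [Complex.I_sq] <;> ring

theorem adjoint_mul_self_add_mul_adjoint (A : H →L[ℂ] H) :
    adjoint A * A + A * adjoint A =
      (reP A + imP A) * (reP A + imP A) + (reP A - imP A) * (reP A - imP A) := by
  simp only [reP, imP, smul_add, smul_sub, add_mul, mul_add, sub_mul, mul_sub, smul_mul_smul_comm]
  match_scalars <;> field_simp <;> ring_nf <;> simp only [Complex.I_sq] <;> ring

end RealImaginaryParts

theorem stmt6_general {H : Type*} [NormedAddCommGroup H] [InnerProductSpace ℂ H]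
    [CompleteSpace H] (A : H →L[ℂ] H) :
    (1/4 : ℝ) * ‖adjoint A * A + A * adjoint A‖ ≤
        (1 / (2 * Real.sqrt 2)) *
          Real.sqrt (‖reP A + imP A‖ ^ 4 + ‖reP A - imP A‖ ^ 4) ∧
    (1 / (2 * Real.sqrt 2)) *
        Real.sqrt (‖reP A + imP A‖ ^ 4 + ‖reP A - imP A‖ ^ 4) ≤ numRadius A ^ 2 := by
  have ha : ‖reP A + imP A‖ ≤ √2 * numRadius A := by
    rw [reP_add_imP, ← Complex.norm_one_sub_I]
    exact norm_reP_smul_le _ A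
  have hb : ‖reP A - imP A‖ ≤ √2 * numRadius A := by
    rw [reP_sub_imP, ← Complex.norm_one_add_I]
    exact norm_reP_smul_le _ A
  set a := ‖reP A + imP A‖
  set b := ‖reP A - imP A‖
  have hN : ‖adjoint A * A + A * adjoint A‖ ≤ a ^ 2 + b ^ 2 := by
    rw [adjoint_mul_self_add_mul_adjoint, sq, sq]
    exact (norm_add_le _ _).trans (add_le_add (norm_mul_le _ _) (norm_mul_le _ _))
  constructor
  · calc (1/4 : ℝ) * ‖adjoint A * A + A * adjoint A‖ ≤ 1/4 * (√2 * √(a ^ 4 + b ^ 4)) := by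
          gcongr; exact hN.trans (sq_add_sq_le_sqrt_two_mul_sqrt a b)
      _ = 1 / (2 * √2) * √(a ^ 4 + b ^ 4) := by
          field_simp; rw [Real.sq_sqrt zero_le_two]; ring
  · calc 1 / (2 * √2) * √(a ^ 4 + b ^ 4) ≤ 1 / (2 * √2) * (2 * √2 * numRadius A ^ 2) := by
          gcongr; exact sqrt_pow_four_add_pow_four_le (norm_nonneg _) (norm_nonneg _) ha hb
      _ = numRadius A ^ 2 := by field_simp

theorem stmt6 {H : Type*} [NormedAddCommGroup H] [InnerProductSpace ℂ H]
    [CompleteSpace H] [Nontrivial H] (A : H →L[ℂ] H) :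
    (1/4 : ℝ) * ‖adjoint A * A + A * adjoint A‖ ≤
        (1 / (2 * Real.sqrt 2)) *
          Real.sqrt (‖reP A + imP A‖ ^ 4 + ‖reP A - imP A‖ ^ 4) ∧
    (1 / (2 * Real.sqrt 2)) *
        Real.sqrt (‖reP A + imP A‖ ^ 4 + ‖reP A - imP A‖ ^ 4) ≤ numRadius A ^ 2 :=
  stmt6_general A
end
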